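/- arXiv:1902.00600 — 4 statements merged into one kernel-verified Lean document; each statement's English description precedes it below -/
import Mathlib

section
/- Fix a node u ∈ V and n sample configurations σ^(1),…,σ^(n) ∈ Π_{i∈V} A_i. Assume max_σ |g_{uk}(σ)| ≤ 1 for all k ∈ K_u and |Σ_{k∈K_u} θ*_k g_{uk}(σ^(t))| ≤ γ for every t. Define the empirical correlation matrix Ĥ_{k₁k₂} = (1/n) Σ_{t=1}^n g_{uk₁}(σ^(t)) g_{uk₂}(σ^(t)) and define δS_n(Δ, θ*) = (1/n) Σ_{t=1}^n exp(−Σ_{k∈K_u} θ*_k g_{uk}(σ^(t))) · [exp(−Σ_{k∈K_u} Δ_k g_{uk}(σ^(t))) − 1 + Σ_{k∈K_u} Δ_k g_{uk}(σ^(t))]. Then for every Δ : K_u → ℝ, δS_n(Δ, θ*) ≥ exp(−γ) · (Σ_{k₁,k₂∈K_u} Δ_{k₁} Ĥ_{k₁k₂} Δ_{k₂}) / (2 + ‖Δ‖₁), where ‖Δ‖₁ = Σ_{k∈K_u} |Δ_k|. -/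
open Finset

/-- The locally centered basis function
`g_{ik}(σ) = f_k(σ) − (1/|A_i|) Σ_{a∈A_i} f_k(σ[i:=a])`. -/
noncomputable def locg {V : Type*} [DecidableEq V] (A : V → Type*) [∀ i, Fintype (A i)]
    {K : Type*} (f : K → (∀ i, A i) → ℝ) (i : V) (k : K) (σ : ∀ j, A j) : ℝ :=
  f k σ - (1 / (Fintype.card (A i) : ℝ)) * ∑ a : A i, f k (Function.update σ i a)

/-- The set of factors `K_i = {k ∈ K : i ∈ ∂k}` whose neighborhood contains `i`. -/
def Kat {V K : Type*} [Fintype K] [DecidableEq V] (nbr : K → Finset V) (i : V) : Finset K :=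
  Finset.univ.filter (fun k => i ∈ nbr k)

/-!
Write `x_t = Σ_k Δ_k g_{uk}(σ^(t))`, so that `ΔᵀĤΔ` is the sample mean of `x_t²`. Each summand of
`δS_n` is bounded termwise: the weight `exp(-θ*·g)` is at least `exp(-γ)`, and the Taylor residual
`exp(-x) - 1 + x` is at least `x² / (2 + |x|) ≥ x² / (2 + ‖Δ‖₁)`, since `|g_{uk}| ≤ 1` gives
`|x_t| ≤ ‖Δ‖₁`.
-/

open Real

/- `F y = (2 + y) e^{-y} + y` is monotone on `[0, ∞)` because `F' y = 1 - (1 + y) e^{-y} ≥ 0`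
by `1 + y ≤ e^y`. -/
theorem two_sub_le_two_add_mul_exp_neg {x : ℝ} (hx : 0 ≤ x) : 2 - x ≤ (2 + x) * exp (-x) := by
  set F : ℝ → ℝ := fun y => (2 + y) * exp (-y) + y
  have hF : ∀ y, HasDerivAt F (1 - (1 + y) * exp (-y)) y := fun y => by
    have := (((hasDerivAt_id y).const_add 2).mul (hasDerivAt_neg y).exp).add (hasDerivAt_id y)
    exact this.congr_deriv (by simp; ring)
  have hF' : ∀ y ∈ interior (Set.Ici (0 : ℝ)), 0 ≤ deriv F y := fun y _ => by
    rw [(hF y).deriv, sub_nonneg, exp_neg, ← div_eq_mul_inv, div_le_one (exp_pos y)]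
    linarith [add_one_le_exp y]
  have hmono : MonotoneOn F (Set.Ici 0) :=
    monotoneOn_of_deriv_nonneg (convex_Ici 0)
      (fun y _ => (hF y).continuousAt.continuousWithinAt)
      (fun y _ => (hF y).differentiableAt.differentiableWithinAt) hF'
  have := hmono Set.self_mem_Ici hx hx
  simp only [F, add_zero, neg_zero, exp_zero, mul_one] at this
  linarith

theorem sq_div_two_add_abs_le_exp_neg_sub_one_add (x : ℝ) :
    x ^ 2 / (2 + |x|) ≤ exp (-x) - 1 + x := by
  rcases le_or_gt 0 x with hx | hx
  · rw [abs_of_nonneg hx, div_le_iff₀ (by linarith)]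
    nlinarith [two_sub_le_two_add_mul_exp_neg hx]
  · have hq := quadratic_le_exp_of_nonneg (neg_nonneg.2 hx.le)
    calc x ^ 2 / (2 + |x|) ≤ x ^ 2 / 2 := by gcongr; exact le_add_of_nonneg_right (abs_nonneg x)
      _ ≤ exp (-x) - 1 + x := by linarith [neg_sq x]

theorem exp_neg_mul_sq_div_le_exp_neg_mul_exp_neg_sub_one_add {a x γ L : ℝ} (ha : |a| ≤ γ) (hx : |x| ≤ L) :
    exp (-γ) * (x ^ 2 / (2 + L)) ≤ exp (-a) * (exp (-x) - 1 + x) := by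
  have hγ : exp (-γ) ≤ exp (-a) := exp_le_exp.2 (by linarith [le_abs_self a])
  have hres : x ^ 2 / (2 + L) ≤ exp (-x) - 1 + x :=
    calc x ^ 2 / (2 + L) ≤ x ^ 2 / (2 + |x|) := by gcongr
      _ ≤ exp (-x) - 1 + x := sq_div_two_add_abs_le_exp_neg_sub_one_add x
  have : 0 ≤ x ^ 2 / (2 + L) := div_nonneg (sq_nonneg x) (by linarith [abs_nonneg x])
  exact mul_le_mul hγ hres this (exp_nonneg _)

theorem abs_sum_mul_le_sum_abs {ι : Type*} {S : Finset ι} {c g : ι → ℝ}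
    (hg : ∀ k ∈ S, |g k| ≤ 1) : |∑ k ∈ S, c k * g k| ≤ ∑ k ∈ S, |c k| :=
  (abs_sum_le_sum_abs _ _).trans <| sum_le_sum fun k hk => by
    rw [abs_mul]; exact mul_le_of_le_one_right (abs_nonneg _) (hg k hk)

theorem sum_mul_gram_mul_eq_mul_sum_sq {ι T : Type*} [Fintype T] (S : Finset ι) (c : ℝ)
    (g : ι → T → ℝ) (Δ : ι → ℝ) :
    ∑ k₁ ∈ S, ∑ k₂ ∈ S, Δ k₁ * (c * ∑ t, g k₁ t * g k₂ t) * Δ k₂ =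
      c * ∑ t, (∑ k ∈ S, Δ k * g k t) ^ 2 := by
  simp_rw [sq, sum_mul_sum, mul_sum, sum_mul]
  symm
  rw [sum_comm]
  refine sum_congr rfl fun k₁ _ => ?_
  rw [sum_comm]
  exact sum_congr rfl fun k₂ _ => sum_congr rfl fun t _ => by ring

theorem giso_taylor_residual_bound_general
    {V : Type*} [DecidableEq V]
    (A : V → Type*) [∀ i, Fintype (A i)]
    {K : Type*} [Fintype K]
    (nbr : K → Finset V) (f : K → (∀ i, A i) → ℝ)
    (θ : K → ℝ) (γ : ℝ) (u : V)
    (n : ℕ) (s : Fin n → ∀ i, A i)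
    (hg : ∀ k ∈ Kat nbr u, ∀ σ : ∀ i, A i, |locg A f u k σ| ≤ 1)
    (hγ : ∀ t : Fin n, |∑ k ∈ Kat nbr u, θ k * locg A f u k (s t)| ≤ γ)
    (Δ : K → ℝ) :
    (1 / n : ℝ) * ∑ t : Fin n,
        Real.exp (-∑ k ∈ Kat nbr u, θ k * locg A f u k (s t)) *
          (Real.exp (-∑ k ∈ Kat nbr u, Δ k * locg A f u k (s t)) - 1 +
            ∑ k ∈ Kat nbr u, Δ k * locg A f u k (s t)) ≥
      Real.exp (-γ) *
        (∑ k₁ ∈ Kat nbr u, ∑ k₂ ∈ Kat nbr u,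
          Δ k₁ * ((1 / n : ℝ) * ∑ t : Fin n, locg A f u k₁ (s t) * locg A f u k₂ (s t)) * Δ k₂) /
        (2 + ∑ k ∈ Kat nbr u, |Δ k|) := by
  set L := ∑ k ∈ Kat nbr u, |Δ k|
  rw [sum_mul_gram_mul_eq_mul_sum_sq, ge_iff_le]
  calc exp (-γ) * ((1 / n : ℝ) * ∑ t : Fin n, (∑ k ∈ Kat nbr u, Δ k * locg A f u k (s t)) ^ 2) /
        (2 + L)
      = (1 / n : ℝ) * ∑ t : Fin n,
          exp (-γ) * ((∑ k ∈ Kat nbr u, Δ k * locg A f u k (s t)) ^ 2 / (2 + L)) := by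
        rw [mul_left_comm, mul_div_assoc, mul_div_assoc, sum_div, mul_sum]
    _ ≤ _ := by
        refine mul_le_mul_of_nonneg_left (sum_le_sum fun t _ => ?_) (by positivity)
        exact exp_neg_mul_sq_div_le_exp_neg_mul_exp_neg_sub_one_add (hγ t)
          (abs_sum_mul_le_sum_abs fun k hk => hg k hk (s t))

/-- Lemma 6 (deterministic lower bound on the Taylor residual of the GISO): if
`|g_{uk}| ≤ 1` for `k ∈ K_u` and `|Σ_{k∈K_u} θ*_k g_{uk}(σ^{(t)})| ≤ γ` for every sample,
then `δS_n(Δ, θ*) ≥ exp(−γ) · ΔᵀĤΔ / (2 + ‖Δ‖₁)` for every `Δ`. -/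
theorem giso_taylor_residual_bound
    {V : Type*} [Fintype V] [DecidableEq V]
    (A : V → Type*) [∀ i, Fintype (A i)] [∀ i, Nonempty (A i)]
    {K : Type*} [Fintype K]
    (nbr : K → Finset V) (f : K → (∀ i, A i) → ℝ)
    (θ : K → ℝ) (γ : ℝ) (u : V)
    (n : ℕ) (s : Fin n → ∀ i, A i)
    (hg : ∀ k ∈ Kat nbr u, ∀ σ : ∀ i, A i, |locg A f u k σ| ≤ 1)
    (hγ : ∀ t : Fin n, |∑ k ∈ Kat nbr u, θ k * locg A f u k (s t)| ≤ γ)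
    (Δ : K → ℝ) :
    (1 / n : ℝ) * ∑ t : Fin n,
        Real.exp (-∑ k ∈ Kat nbr u, θ k * locg A f u k (s t)) *
          (Real.exp (-∑ k ∈ Kat nbr u, Δ k * locg A f u k (s t)) - 1 +
            ∑ k ∈ Kat nbr u, Δ k * locg A f u k (s t)) ≥
      Real.exp (-γ) *
        (∑ k₁ ∈ Kat nbr u, ∑ k₂ ∈ Kat nbr u,
          Δ k₁ * ((1 / n : ℝ) * ∑ t : Fin n, locg A f u k₁ (s t) * locg A f u k₂ (s t)) * Δ k₂) /
        (2 + ∑ k ∈ Kat nbr u, |Δ k|) :=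
  giso_taylor_residual_bound_general A nbr f θ γ u n s hg hγ Δ
end

section
/- Fix a node u ∈ V and assume max_σ |g_{uk}(σ)| ≤ 1 for all k ∈ K_u, and let γ be the maximum interaction strength. Let 𝐊_u = |K_u|, let ε₁ > 0, δ₁ ∈ (0,1), and let n > (2 exp(2γ)/ε₁²) · log(2𝐊_u/δ₁). Draw σ^(1),…,σ^(n) i.i.d. from μ. Then with probability at least 1 − δ₁ under the n-fold product measure μ^⊗n, for every k ∈ K_u: |(1/n) Σ_{t=1}^n g_{uk}(σ^(t)) exp(−Σ_{l∈K_u} θ*_l g_{ul}(σ^(t)))| < ε₁. -/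
open Finset

/-!
Each gradient component is the empirical mean of `n` i.i.d. copies of
`X_k = g_{uk} exp (-∑_{l ∈ K_u} θ*_l g_{ul})`. Resampling `σ_u` uniformly leaves
`∑_k θ*_k f_k - ∑_{l ∈ K_u} θ*_l g_{ul}` unchanged (factors not containing `u` do not see `σ_u`,
and `f_l - g_{ul}` is already an average over `σ_u`) while it averages `g_{uk}` to zero. Since
`μ(σ) X_k(σ)` is `g_{uk}(σ) / Z` times the exponential of that invariant quantity, `E_μ X_k = 0`.
As `|X_k| ≤ e^γ`, Hoeffding's inequality bounds each one-sided tail by `exp (-n ε₁² / (2 e^{2γ}))`,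
and a union bound over the `2 |K_u|` tails gives failure probability at most `δ₁`.
-/

open MeasureTheory ProbabilityTheory

section Hoeffding

variable {Ω ι : Type*} [MeasurableSpace Ω] [Fintype ι] {ν : Measure Ω} [IsProbabilityMeasure ν]
  {X : Ω → ℝ} {B : ℝ}

lemma hasSubgaussianMGF_of_abs_le_of_integral_eq_zero (hX : AEMeasurable X ν)
    (hB : ∀ᵐ ω ∂ν, |X ω| ≤ B) (h0 : ν[X] = 0) :
    HasSubgaussianMGF X (B ^ 2).toNNReal ν := by
  obtain ⟨ω, hω⟩ := hB.exists
  have hB0 : 0 ≤ B := (abs_nonneg _).trans hω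
  convert hasSubgaussianMGF_of_mem_Icc_of_integral_eq_zero hX
    (hB.mono fun ω hω => abs_le.1 hω) h0 using 1
  rw [sub_neg_eq_add, ← two_mul, ← NNReal.coe_inj, Real.coe_toNNReal _ (sq_nonneg B)]
  simp [abs_of_nonneg hB0]

lemma measureReal_pi_sampleMean_ge_le (hX : AEMeasurable X ν) (hB : ∀ᵐ ω ∂ν, |X ω| ≤ B)
    (h0 : ν[X] = 0) {ε : ℝ} (hε : 0 ≤ ε) :
    (Measure.pi fun _ : ι => ν).real {s | ε ≤ (Fintype.card ι : ℝ)⁻¹ * ∑ t, X (s t)}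
      ≤ Real.exp (-(Fintype.card ι * ε ^ 2 / (2 * B ^ 2))) := by
  rcases (Fintype.card ι).eq_zero_or_pos with hn | hn
  · simp [hn]
  have hn' : (0 : ℝ) < Fintype.card ι := by exact_mod_cast hn
  have hsub : HasSubgaussianMGF X (B ^ 2).toNNReal ν :=
    hasSubgaussianMGF_of_abs_le_of_integral_eq_zero hX hB h0
  have hindep : iIndepFun (fun t (s : ι → Ω) => X (s t)) (Measure.pi fun _ => ν) :=
    iIndepFun_pi fun _ => hX
  have hcoord : ∀ t, HasSubgaussianMGF (fun s : ι → Ω => X (s t)) (B ^ 2).toNNReal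
      (Measure.pi fun _ => ν) := fun t =>
    HasSubgaussianMGF.of_map (Y := Function.eval t) (measurable_pi_apply t).aemeasurable
      (by rw [(measurePreserving_eval _ t).map_eq]; exact hsub)
  have := HasSubgaussianMGF.measure_sum_ge_le_of_iIndepFun hindep (s := univ)
    (fun t _ => hcoord t) (mul_nonneg hn'.le hε)
  convert this using 3
  · ext s
    rw [← div_eq_inv_mul, le_div_iff₀ hn', mul_comm]
  · push_cast
    rw [sum_const, card_univ, nsmul_eq_mul, Real.coe_toNNReal _ (sq_nonneg B)]
    field_simp

lemma measureReal_pi_forall_abs_sampleMean_lt_ge {κ : Type*} (S : Finset κ) {X : κ → Ω → ℝ}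
    (hX : ∀ k ∈ S, AEMeasurable (X k) ν) (hB : ∀ k ∈ S, ∀ᵐ ω ∂ν, |X k ω| ≤ B)
    (h0 : ∀ k ∈ S, ν[X k] = 0) {ε : ℝ} (hε : 0 ≤ ε) :
    1 - 2 * #S * Real.exp (-(Fintype.card ι * ε ^ 2 / (2 * B ^ 2)))
      ≤ (Measure.pi fun _ : ι => ν).real
          {s | ∀ k ∈ S, |(Fintype.card ι : ℝ)⁻¹ * ∑ t, X k (s t)| < ε} := by
  set P := Measure.pi fun _ : ι => ν
  set T := Real.exp (-(Fintype.card ι * ε ^ 2 / (2 * B ^ 2)))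
  set E := {s : ι → Ω | ∀ k ∈ S, |(Fintype.card ι : ℝ)⁻¹ * ∑ t, X k (s t)| < ε}
  have hcompl : Eᶜ ⊆ ⋃ k ∈ S, ({s | ε ≤ (Fintype.card ι : ℝ)⁻¹ * ∑ t, X k (s t)} ∪
      {s | ε ≤ (Fintype.card ι : ℝ)⁻¹ * ∑ t, (-X k) (s t)}) := by
    intro s hs
    simp only [E, Set.mem_compl_iff, Set.mem_ofPred_eq, not_forall, not_lt] at hs
    obtain ⟨k, hk, hle⟩ := hs
    simp only [Set.mem_iUnion, Set.mem_union, Set.mem_ofPred_eq, Pi.neg_apply, sum_neg_distrib,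
      mul_neg]
    exact ⟨k, hk, le_abs.1 hle⟩
  have htail : P.real Eᶜ ≤ 2 * #S * T :=
    calc P.real Eᶜ ≤ ∑ k ∈ S, (T + T) := by
          refine (measureReal_mono hcompl (measure_ne_top _ _)).trans <|
            (measureReal_biUnion_finset_le _ _).trans <|
            sum_le_sum fun k hk => (measureReal_union_le _ _).trans (add_le_add ?_ ?_)
          · exact measureReal_pi_sampleMean_ge_le (hX k hk) (hB k hk) (h0 k hk) hε
          · refine measureReal_pi_sampleMean_ge_le (hX k hk).neg ?_ ?_ hε
            · simpa only [Pi.neg_apply, abs_neg] using hB k hk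
            · rw [integral_neg', h0 k hk, neg_zero]
      _ = 2 * #S * T := by rw [sum_const, nsmul_eq_mul]; ring
  have hunion : 1 ≤ P.real E + P.real Eᶜ := by
    simpa [probReal_univ] using measureReal_union_le (μ := P) E Eᶜ
  linarith

end Hoeffding

lemma PMF.measureReal_pi_toMeasure {Ω ι : Type*} [Fintype Ω] [MeasurableSpace Ω]
    [MeasurableSingletonClass Ω] [Fintype ι] [DecidableEq ι] (p : PMF Ω) (E : Set (ι → Ω)) :
    (Measure.pi fun _ : ι => p.toMeasure).real E
      = ∑ s, E.indicator (fun s => ∏ t, (p (s t)).toReal) s := by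
  classical
  have hE : ((univ.filter (· ∈ E) : Finset (ι → Ω)) : Set (ι → Ω)) = E := by ext; simp
  conv_lhs => rw [← hE, ← sum_measureReal_singleton, sum_filter]
  refine sum_congr rfl fun s _ => ?_
  rw [Set.indicator_apply]
  congr 1
  rw [measureReal_def, Measure.pi_singleton, ENNReal.toReal_prod]
  simp only [p.toMeasure_apply_singleton _ (measurableSet_singleton _)]

section Resampling

variable {V : Type*} [Fintype V] [DecidableEq V] {A : V → Type*} [∀ i, Fintype (A i)]

lemma sum_sum_update_eq_card_smul {M : Type*} [AddCommMonoid M] (u : V) (F : (∀ i, A i) → M) :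
    ∑ σ, ∑ a : A u, F (Function.update σ u a) = Fintype.card (A u) • ∑ σ, F σ := by
  have hinv : Function.Involutive fun x : (∀ i, A i) × A u => (Function.update x.1 u x.2, x.1 u) :=
    fun x => by simp
  rw [← Fintype.sum_prod_type', Fintype.sum_bijective _ hinv.bijective _ (fun x => F x.1)
    fun _ => rfl, Fintype.sum_prod_type, smul_sum]
  simp

lemma sum_mul_eq_zero_of_sum_update_eq_zero (u : V) [Nonempty (A u)] {G h : (∀ i, A i) → ℝ}
    (hG : ∀ σ, ∑ a : A u, G (Function.update σ u a) = 0)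
    (hh : ∀ σ (a : A u), h (Function.update σ u a) = h σ) :
    ∑ σ, G σ * h σ = 0 := by
  have hcard : Fintype.card (A u) • ∑ σ, G σ * h σ = 0 := by
    rw [← sum_sum_update_eq_card_smul u (fun σ => G σ * h σ)]
    exact sum_eq_zero fun σ _ => by simp only [hh, ← sum_mul, hG, zero_mul]
  simpa [Fintype.card_ne_zero] using hcard

end Resampling

section LocallyCentered

variable {V : Type*} [DecidableEq V] {A : V → Type*} [∀ i, Fintype (A i)] {K : Type*}
  (f : K → (∀ i, A i) → ℝ)

lemma sum_locg_update_eq_zero (u : V) [Nonempty (A u)] (k : K) (σ : ∀ i, A i) :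
    ∑ a : A u, locg A f u k (Function.update σ u a) = 0 := by
  simp only [locg, Function.update_idem, sum_sub_distrib, sum_const, card_univ, nsmul_eq_mul]
  field_simp
  ring

lemma sub_locg_update_eq (u : V) (k : K) (σ : ∀ i, A i) (a : A u) :
    f k (Function.update σ u a) - locg A f u k (Function.update σ u a)
      = f k σ - locg A f u k σ := by
  simp [locg, Function.update_idem]

variable [Fintype K] {nbr : K → Finset V}

lemma energy_sub_sum_locg_update_eq
    (hloc : ∀ k (σ τ : ∀ i, A i), (∀ i ∈ nbr k, σ i = τ i) → f k σ = f k τ)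
    (θ : K → ℝ) (u : V) (σ : ∀ i, A i) (a : A u) :
    ∑ l, θ l * f l (Function.update σ u a)
        - ∑ l ∈ Kat nbr u, θ l * locg A f u l (Function.update σ u a)
      = ∑ l, θ l * f l σ - ∑ l ∈ Kat nbr u, θ l * locg A f u l σ := by
  have hsplit : ∀ τ : ∀ i, A i, ∑ l, θ l * f l τ - ∑ l ∈ Kat nbr u, θ l * locg A f u l τ
      = ∑ l ∈ Kat nbr u, θ l * (f l τ - locg A f u l τ)
        + ∑ l with u ∉ nbr l, θ l * f l τ := by
    intro τ
    rw [← sum_filter_add_sum_filter_not univ (fun l => u ∈ nbr l)]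
    simp only [Kat, mul_sub, sum_sub_distrib]
    ring
  rw [hsplit, hsplit]
  congr 1
  · exact sum_congr rfl fun l _ => by rw [sub_locg_update_eq]
  · refine sum_congr rfl fun l hl => ?_
    have hu : u ∉ nbr l := (mem_filter.1 hl).2
    rw [hloc l _ σ fun i hi => Function.update_of_ne (ne_of_mem_of_not_mem hi hu) a σ]

end LocallyCentered

section Gibbs

variable {V : Type*} [Fintype V] [DecidableEq V] {A : V → Type*} [∀ i, Fintype (A i)]
  {K : Type*} [Fintype K] {f : K → (∀ i, A i) → ℝ} {θ : K → ℝ} {μ : (∀ i, A i) → ℝ}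

lemma gibbs_nonneg
    (hμ : ∀ σ, μ σ = Real.exp (∑ k, θ k * f k σ) / ∑ τ, Real.exp (∑ k, θ k * f k τ))
    (σ : ∀ i, A i) : 0 ≤ μ σ := by
  rw [hμ]
  positivity

lemma sum_gibbs_eq_one [∀ i, Nonempty (A i)]
    (hμ : ∀ σ, μ σ = Real.exp (∑ k, θ k * f k σ) / ∑ τ, Real.exp (∑ k, θ k * f k τ)) :
    ∑ σ, μ σ = 1 := by
  simp_rw [hμ, ← sum_div]
  exact div_self (sum_pos (fun τ _ => Real.exp_pos _) univ_nonempty).ne'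

lemma sum_gibbs_mul_locg_mul_exp_eq_zero {nbr : K → Finset V}
    (hloc : ∀ k (σ τ : ∀ i, A i), (∀ i ∈ nbr k, σ i = τ i) → f k σ = f k τ)
    (hμ : ∀ σ, μ σ = Real.exp (∑ k, θ k * f k σ) / ∑ τ, Real.exp (∑ k, θ k * f k τ))
    (u : V) [Nonempty (A u)] (k : K) :
    ∑ σ, μ σ * (locg A f u k σ * Real.exp (-∑ l ∈ Kat nbr u, θ l * locg A f u l σ)) = 0 := by
  set Z := ∑ τ, Real.exp (∑ k, θ k * f k τ)
  have hsummand : ∀ σ, μ σ * (locg A f u k σ * Real.exp (-∑ l ∈ Kat nbr u, θ l * locg A f u l σ))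
      = locg A f u k σ *
        (Real.exp (∑ l, θ l * f l σ - ∑ l ∈ Kat nbr u, θ l * locg A f u l σ) / Z) := by
    intro σ
    rw [hμ, sub_eq_add_neg, Real.exp_add]
    ring
  simp_rw [hsummand]
  exact sum_mul_eq_zero_of_sum_update_eq_zero u (sum_locg_update_eq_zero f u k)
    fun σ a => by rw [energy_sub_sum_locg_update_eq f hloc]

end Gibbs

lemma abs_mul_exp_neg_le {x y γ : ℝ} (hx : |x| ≤ 1) (hy : |y| ≤ γ) :
    |x * Real.exp (-y)| ≤ Real.exp γ := by
  rw [abs_mul, Real.abs_exp]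
  calc |x| * Real.exp (-y) ≤ 1 * Real.exp γ :=
        mul_le_mul hx (Real.exp_le_exp.2 ((neg_le_abs y).trans hy)) (by positivity) zero_le_one
    _ = Real.exp γ := one_mul _

lemma mul_exp_neg_le_of_log_div_lt {m δ x : ℝ} (hm : 0 ≤ m) (hδ : 0 < δ)
    (hx : Real.log (m / δ) < x) : m * Real.exp (-x) ≤ δ := by
  rcases hm.eq_or_lt with rfl | hm
  · simpa using hδ.le
  have : Real.exp (-x) < δ / m := by
    rw [← inv_div, ← Real.exp_log (div_pos hm hδ), ← Real.exp_neg]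
    exact Real.exp_lt_exp.2 (neg_lt_neg hx)
  rw [lt_div_iff₀ hm] at this
  linarith

lemma mul_exp_neg_le_of_lt_mul_log {m δ ε γ x : ℝ} (hm : 0 ≤ m) (hδ : 0 < δ) (hε : 0 < ε)
    (hx : x > 2 * Real.exp (2 * γ) / ε ^ 2 * Real.log (m / δ)) :
    m * Real.exp (-(x * ε ^ 2 / (2 * Real.exp γ ^ 2))) ≤ δ := by
  refine mul_exp_neg_le_of_log_div_lt hm hδ ?_
  rw [← Real.exp_nat_mul, Nat.cast_ofNat, lt_div_iff₀ (by positivity)]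
  calc Real.log (m / δ) * (2 * Real.exp (2 * γ))
      = 2 * Real.exp (2 * γ) / ε ^ 2 * Real.log (m / δ) * ε ^ 2 := by
        field_simp
    _ < x * ε ^ 2 := mul_lt_mul_of_pos_right hx (by positivity)

theorem gradient_concentration_general
    {V : Type*} [Fintype V] [DecidableEq V]
    (A : V → Type*) [∀ i, Fintype (A i)] [∀ i, Nonempty (A i)]
    {K : Type*} [Fintype K]
    (nbr : K → Finset V) (f : K → (∀ i, A i) → ℝ)
    (hloc : ∀ k (σ τ : ∀ i, A i), (∀ i ∈ nbr k, σ i = τ i) → f k σ = f k τ)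
    (θ : K → ℝ) (γ : ℝ)
    (hγ : ∀ (i : V) (σ : ∀ j, A j), |∑ k ∈ Kat nbr i, θ k * locg A f i k σ| ≤ γ)
    (μ : (∀ i, A i) → ℝ)
    (hμ : ∀ σ, μ σ =
      Real.exp (∑ k, θ k * f k σ) / ∑ τ : ∀ i, A i, Real.exp (∑ k, θ k * f k τ))
    (u : V)
    (hg : ∀ k ∈ Kat nbr u, ∀ σ : ∀ i, A i, |locg A f u k σ| ≤ 1)
    (ε₁ δ₁ : ℝ) (hε : 0 < ε₁) (hδ : 0 < δ₁)
    (n : ℕ)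
    (hn : (n : ℝ) > 2 * Real.exp (2 * γ) / ε₁ ^ 2 *
      Real.log (2 * ((Kat nbr u).card : ℝ) / δ₁)) :
    ∑ s : Fin n → ∀ i, A i,
      Set.indicator
        {s : Fin n → ∀ i, A i | ∀ k ∈ Kat nbr u,
          |(1 / n : ℝ) * ∑ t : Fin n, locg A f u k (s t) *
            Real.exp (-∑ l ∈ Kat nbr u, θ l * locg A f u l (s t))| < ε₁}
        (fun s => ∏ t : Fin n, μ (s t)) s ≥ 1 - δ₁ := by
  let _ : MeasurableSpace (∀ i, A i) := ⊤
  have hμ0 := gibbs_nonneg hμ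
  set p : PMF (∀ i, A i) := PMF.ofFintype (fun σ => ENNReal.ofReal (μ σ)) (by
    rw [← ENNReal.ofReal_sum_of_nonneg fun σ _ => hμ0 σ, sum_gibbs_eq_one hμ, ENNReal.ofReal_one])
  have hp : ∀ σ, (p σ).toReal = μ σ := fun σ => by
    simp [p, ENNReal.toReal_ofReal (hμ0 σ)]
  have hbound := measureReal_pi_forall_abs_sampleMean_lt_ge (ι := Fin n) (ν := p.toMeasure)
    (Kat nbr u) (B := Real.exp γ)
    (X := fun k σ => locg A f u k σ * Real.exp (-∑ l ∈ Kat nbr u, θ l * locg A f u l σ))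
    (fun _ _ => Measurable.of_discrete.aemeasurable)
    (fun k hk => ae_of_all _ fun σ => abs_mul_exp_neg_le (hg k hk σ) (hγ u σ))
    (fun k _ => by
      simpa [p.integral_eq_sum, hp] using sum_gibbs_mul_locg_mul_exp_eq_zero hloc hμ u k)
    hε.le
  have htail := mul_exp_neg_le_of_lt_mul_log (by positivity) hδ hε hn
  have hP : (fun s : Fin n → ∀ i, A i => ∏ t, μ (s t)) = fun s => ∏ t, (p (s t)).toReal := by
    simp only [hp]
  rw [hP, ← p.measureReal_pi_toMeasure]
  simp only [Fintype.card_fin, one_div] at hbound ⊢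
  linarith

/-- Proposition 1 (gradient concentration for GRISE): if
`n > (2 exp(2γ)/ε₁²) log(2𝐊_u/δ₁)`, then with probability at least `1 − δ₁` under the
`n`-fold product of the Gibbs measure, every component of the gradient of the GISO at
the true parameters is smaller than `ε₁` in absolute value. -/
theorem gradient_concentration
    {V : Type*} [Fintype V] [DecidableEq V]
    (A : V → Type*) [∀ i, Fintype (A i)] [∀ i, Nonempty (A i)]
    {K : Type*} [Fintype K]
    (nbr : K → Finset V) (f : K → (∀ i, A i) → ℝ)
    (hloc : ∀ k (σ τ : ∀ i, A i), (∀ i ∈ nbr k, σ i = τ i) → f k σ = f k τ)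
    (θ : K → ℝ) (γ : ℝ)
    (hγ : ∀ (i : V) (σ : ∀ j, A j), |∑ k ∈ Kat nbr i, θ k * locg A f i k σ| ≤ γ)
    (μ : (∀ i, A i) → ℝ)
    (hμ : ∀ σ, μ σ =
      Real.exp (∑ k, θ k * f k σ) / ∑ τ : ∀ i, A i, Real.exp (∑ k, θ k * f k τ))
    (u : V)
    (hg : ∀ k ∈ Kat nbr u, ∀ σ : ∀ i, A i, |locg A f u k σ| ≤ 1)
    (ε₁ δ₁ : ℝ) (hε : 0 < ε₁) (hδ : 0 < δ₁) (hδ' : δ₁ < 1)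
    (n : ℕ)
    (hn : (n : ℝ) > 2 * Real.exp (2 * γ) / ε₁ ^ 2 *
      Real.log (2 * ((Kat nbr u).card : ℝ) / δ₁)) :
    ∑ s : Fin n → ∀ i, A i,
      Set.indicator
        {s : Fin n → ∀ i, A i | ∀ k ∈ Kat nbr u,
          |(1 / n : ℝ) * ∑ t : Fin n, locg A f u k (s t) *
            Real.exp (-∑ l ∈ Kat nbr u, θ l * locg A f u l (s t))| < ε₁}
        (fun s => ∏ t : Fin n, μ (s t)) s ≥ 1 - δ₁ :=
  gradient_concentration_general A nbr f hloc θ γ hγ μ hμ u hg ε₁ δ₁ hε hδ n hn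
end

section
/- (LLC in ℓ_{∞,2}-norm from nonsingular parametrization of cliques.) Let i ∈ V, assume max_σ |g_{ik}(σ)| ≤ 1 for all k ∈ K_i, |A_j| ≤ q for all j ∈ V, |∂k| ≤ L for all k ∈ K with L ≥ 1, and let γ be the maximum interaction strength. Let X_i ⊆ ℝ^{K_i}, and suppose there is ρ > 0 such that for every maximal clique c ∈ MaxCli with i ∈ c and every x ∈ X_i: Σ_{a∈A_i} μ_i(a) · Σ_{τ} (Σ_{k∈span(c)} x_k h_k(σ(a,τ)))² ≥ ρ · Σ_{k∈span(c)} x_k², where μ_i is the marginal law of the i-th coordinate under μ, τ ranges over all assignments of the coordinates in c∖{i}, and σ(a,τ) is any configuration whose i-th coordinate is a and whose coordinates on c∖{i} are given by τ (h_k depends only on coordinates in c = ∂k). Then for every x ∈ X_i: E_μ[(Σ_{k∈K_i} x_k g_{ik}(σ))²] ≥ ρ · (exp(−2γ)/q)^{L−1} · max_{c∈MaxCli, c∋i} Σ_{k∈span(c)} x_k². -/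
open Finset

/-- `assignOn r τ σ` is the configuration `σ[r:=τ]` that agrees with `τ` on the
coordinates in the finite set `r` and with `σ` elsewhere. -/
def assignOn {V : Type*} [DecidableEq V] {A : V → Type*} (r : Finset V)
    (τ : ∀ j : {x // x ∈ r}, A j.1) (σ : ∀ j, A j) : ∀ j, A j :=
  fun j => if h : j ∈ r then τ ⟨j, h⟩ else σ j

/-- The globally centered basis function of factor `k`, defined by inclusion–exclusion:
`h_k(σ) = f_k(σ) + Σ_{∅ ≠ r ⊆ ∂k} ((−1)^{|r|}/Π_{j∈r}|A_j|) Σ_{τ∈Π_{j∈r}A_j} f_k(σ[r:=τ])`. -/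
noncomputable def globh {V : Type*} [Fintype V] [DecidableEq V] (A : V → Type*)
    [∀ i, Fintype (A i)] {K : Type*} (nbr : K → Finset V) (f : K → (∀ i, A i) → ℝ)
    (k : K) (σ : ∀ j, A j) : ℝ :=
  f k σ + ∑ r ∈ (nbr k).powerset.erase ∅,
    ((-1 : ℝ) ^ r.card / ∏ j ∈ r, (Fintype.card (A j) : ℝ)) *
      ∑ τ : ∀ j : {x // x ∈ r}, A j.1, f k (assignOn r τ σ)

/-- The set of maximal factors: factors whose neighborhood is not strictly contained in
the neighborhood of another factor. -/
def MaxFac {V K : Type*} [Fintype K] [DecidableEq V] (nbr : K → Finset V) : Finset K :=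
  Finset.univ.filter (fun k => ¬ ∃ k', nbr k ⊂ nbr k')

/-- The set of maximal cliques: neighborhoods of maximal factors. -/
def MaxCli {V K : Type*} [Fintype K] [DecidableEq V] (nbr : K → Finset V) :
    Finset (Finset V) :=
  (MaxFac nbr).image nbr

/-- The span of a clique `c`: the maximal factors whose neighborhood equals `c`. -/
def cspan {V K : Type*} [Fintype K] [DecidableEq V] (nbr : K → Finset V) (c : Finset V) :
    Finset K :=
  (MaxFac nbr).filter (fun k => nbr k = c)

/-!
Fix a maximal clique `c ∋ i` and condition on the coordinates outside `s = c ∖ {i}`. On each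
fibre (all reassignments of `s`), every `h_k` with `k ∈ span(c)` sums to zero in each coordinate of
`c`, so it is orthogonal to every function that ignores some coordinate `j ∈ s`. All `g_{ik'}` with
`k' ∉ span(c)`, and all terms of `g_{ik} − h_k` with `k ∈ span(c)`, ignore such a `j` (`c` is
maximal), so `H = Σ_{span(c)} x_k h_k` is the orthogonal projection of `G = Σ_{K_i} x_k g_{ik}`
and `Σ_fibre G² ≥ Σ_fibre H²`. Changing one coordinate moves the energy by at most `2γ`, so `μ`
varies by a factor at most `e^{2γ|s|}` on a fibre of at most `q^{|s|}` points. As `Σ_fibre H²`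
depends only on `σ_i`, averaging over the fibres gives
`E_μ[G²] ≥ e^{-2γ|s|} q^{-|s|} Σ_a μ_i(a) Σ_τ H² ≥ ρ (e^{-2γ}/q)^{L-1} Σ_{span(c)} x_k²` by NPC.
-/

open Function

lemma sum_sq_le_sum_sq_of_sum_mul_eq {ι : Type*} (T : Finset ι) {g h : ι → ℝ}
    (hgh : ∑ t ∈ T, g t * h t = ∑ t ∈ T, h t * h t) : ∑ t ∈ T, h t ^ 2 ≤ ∑ t ∈ T, g t ^ 2 := by
  have hsq : ∑ t ∈ T, g t ^ 2 - ∑ t ∈ T, h t ^ 2 =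
      ∑ t ∈ T, (g t - h t) ^ 2 + 2 * (∑ t ∈ T, g t * h t - ∑ t ∈ T, h t * h t) := by
    rw [mul_sub, mul_sum, mul_sum, ← sum_sub_distrib, ← sum_sub_distrib, ← sum_add_distrib]
    exact sum_congr rfl fun t _ => by ring
  have := sum_nonneg fun t (_ : t ∈ T) => sq_nonneg (g t - h t)
  linarith

lemma sum_mul_sum_le_of_le_mul {ι : Type*} [Fintype ι] {w g : ι → ℝ} {C : ℝ}
    (hw : ∀ a b, w a ≤ C * w b) (hg : ∀ b, 0 ≤ g b) :
    (∑ a, w a) * ∑ b, g b ≤ C * Fintype.card ι * ∑ b, w b * g b := by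
  rw [mul_sum, mul_sum]
  refine sum_le_sum fun b _ => ?_
  calc (∑ a, w a) * g b ≤ (∑ _a : ι, C * w b) * g b :=
        mul_le_mul_of_nonneg_right (sum_le_sum fun a _ => hw a b) (hg b)
    _ = C * Fintype.card ι * (w b * g b) := by
        rw [sum_const, card_univ, nsmul_eq_mul]
        ring

section Reassign

variable {V : Type*} [DecidableEq V] {A : V → Type*}

def restrictOn (r : Finset V) (σ : ∀ j, A j) : ∀ j : {x // x ∈ r}, A j.1 :=
  fun j => σ j.1

lemma assignOn_apply_of_notMem {r : Finset V} {j : V} (hj : j ∉ r)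
    (τ : ∀ l : {x // x ∈ r}, A l.1) (σ : ∀ l, A l) : assignOn r τ σ j = σ j := by
  simp [assignOn, hj]

lemma restrictOn_assignOn (r : Finset V) (τ : ∀ l : {x // x ∈ r}, A l.1) (σ : ∀ l, A l) :
    restrictOn r (assignOn r τ σ) = τ := by
  funext l
  simp [restrictOn, assignOn, l.2]

lemma assignOn_restrictOn {r : Finset V} {σ ς : ∀ l, A l} (h : ∀ l ∉ r, ς l = σ l) :
    assignOn r (restrictOn r ς) σ = ς := by
  funext l
  by_cases hl : l ∈ r <;> simp [assignOn, restrictOn, hl, h]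

lemma assignOn_assignOn (r : Finset V) (τ τ' : ∀ l : {x // x ∈ r}, A l.1) (σ : ∀ l, A l) :
    assignOn r τ (assignOn r τ' σ) = assignOn r τ σ := by
  funext l
  by_cases hl : l ∈ r <;> simp [assignOn, hl]

lemma assignOn_update_of_mem {r : Finset V} {j : V} (hj : j ∈ r)
    (τ : ∀ l : {x // x ∈ r}, A l.1) (σ : ∀ l, A l) (b : A j) :
    assignOn r τ (update σ j b) = assignOn r τ σ := by
  funext l
  by_cases hl : l ∈ r
  · simp [assignOn, hl]
  · simp [assignOn, hl, update_of_ne (ne_of_mem_of_not_mem hj hl).symm]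

lemma assignOn_update_of_notMem {r : Finset V} {j : V} (hj : j ∉ r)
    (τ : ∀ l : {x // x ∈ r}, A l.1) (σ : ∀ l, A l) (b : A j) :
    assignOn r τ (update σ j b) = update (assignOn r τ σ) j b := by
  funext l
  by_cases hl : l ∈ r
  · simp [assignOn, hl, update_of_ne (ne_of_mem_of_not_mem hl hj)]
  · by_cases hlj : l = j
    · subst hlj; simp [assignOn, hl]
    · simp [assignOn, hl, update_of_ne hlj]

variable [∀ j, Fintype (A j)]

def sumOn (r : Finset V) (F : (∀ j, A j) → ℝ) (σ : ∀ j, A j) : ℝ :=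
  ∑ τ : ∀ j : {x // x ∈ r}, A j.1, F (assignOn r τ σ)

lemma sumOn_empty (F : (∀ j, A j) → ℝ) (σ : ∀ j, A j) : sumOn ∅ F σ = F σ := by
  rw [sumOn, Fintype.sum_unique]
  exact congrArg F (assignOn_restrictOn (r := ∅) (by simp))

lemma sumOn_insert {r : Finset V} {j : V} (hj : j ∉ r) (F : (∀ j, A j) → ℝ)
    (σ : ∀ j, A j) : sumOn (insert j r) F σ = ∑ b : A j, sumOn r F (update σ j b) := by
  simp only [sumOn, ← Fintype.sum_prod_type']
  symm
  refine Fintype.sum_equiv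
    { toFun := fun p => restrictOn (insert j r) (update (assignOn r p.2 σ) j p.1)
      invFun := fun τ => (τ ⟨j, mem_insert_self j r⟩,
        restrictOn r (assignOn (insert j r) τ σ))
      left_inv := ?_
      right_inv := ?_ } _ _ ?_
  · rintro ⟨b, τ⟩
    ext l
    · simp [restrictOn]
    · have hl : l.1 ≠ j := ne_of_mem_of_not_mem l.2 hj
      simp [restrictOn, assignOn, hl, l.2]
  · intro τ
    funext ⟨l, hl⟩
    by_cases hlj : l = j
    · subst hlj; simp [restrictOn]
    · simp [restrictOn, assignOn, hlj, hl, (mem_insert.mp hl).resolve_left hlj]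
  · rintro ⟨b, τ⟩
    dsimp only [Equiv.coe_fn_mk]
    rw [assignOn_restrictOn, assignOn_update_of_notMem hj]
    intro l hl
    rw [update_of_ne (ne_of_mem_of_not_mem (mem_insert_self j r) hl).symm]
    exact assignOn_apply_of_notMem (fun h => hl (mem_insert_of_mem h)) τ σ

lemma sumOn_singleton (j : V) (F : (∀ j, A j) → ℝ) (σ : ∀ j, A j) :
    sumOn {j} F σ = ∑ b : A j, F (update σ j b) := by
  rw [← insert_empty, sumOn_insert (notMem_empty j)]
  simp only [sumOn_empty]

lemma sumOn_update_of_mem {r : Finset V} {j : V} (hj : j ∈ r) (F : (∀ j, A j) → ℝ)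
    (σ : ∀ j, A j) (b : A j) : sumOn r F (update σ j b) = sumOn r F σ := by
  simp only [sumOn, assignOn_update_of_mem hj]

lemma sumOn_erase {s : Finset V} {j : V} (hj : j ∈ s) (F : (∀ j, A j) → ℝ) (σ : ∀ j, A j) :
    sumOn s F σ = sumOn (s.erase j) (fun ς => ∑ b : A j, F (update ς j b)) σ := by
  rw [← insert_erase hj, sumOn_insert (notMem_erase j s), erase_insert_eq_erase, erase_idem]
  simp only [sumOn, assignOn_update_of_notMem (notMem_erase j s)]
  exact sum_comm

lemma sumOn_add (r : Finset V) (F G : (∀ j, A j) → ℝ) (σ : ∀ j, A j) :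
    sumOn r (fun ς => F ς + G ς) σ = sumOn r F σ + sumOn r G σ :=
  sum_add_distrib

lemma sumOn_sum_mul {ι : Type*} (r : Finset V) (T : Finset ι) (a : ι → ℝ)
    (F : ι → (∀ j, A j) → ℝ) (σ : ∀ j, A j) :
    sumOn r (fun ς => ∑ t ∈ T, a t * F t ς) σ = ∑ t ∈ T, a t * sumOn r (F t) σ := by
  simp only [sumOn, mul_sum]
  exact sum_comm

lemma sumOn_mul_apply {r : Finset V} {i : V} (hi : i ∉ r) (F : (∀ j, A j) → ℝ)
    (W : A i → ℝ) (σ : ∀ j, A j) :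
    sumOn r (fun ς => F ς * W (ς i)) σ = sumOn r F σ * W (σ i) := by
  simp only [sumOn, sum_mul, assignOn_apply_of_notMem hi]

lemma card_pi_le_pow (r : Finset V) {q : ℕ} (hq : ∀ j, Fintype.card (A j) ≤ q) :
    Fintype.card (∀ j : {x // x ∈ r}, A j.1) ≤ q ^ r.card := by
  rw [Fintype.card_pi, ← Fintype.card_coe r, ← card_univ]
  exact prod_le_pow_card _ _ _ fun j _ => hq j

lemma sumOn_eq_sum_update_assignOn {c : Finset V} {i : V} (hi : i ∈ c) {F : (∀ j, A j) → ℝ}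
    (hF : ∀ σ ς, (∀ j ∈ c, σ j = ς j) → F σ = F ς) (σ d : ∀ j, A j) :
    sumOn (c.erase i) F σ = ∑ τ, F (update (assignOn (c.erase i) τ d) i (σ i)) := by
  refine sum_congr rfl fun τ _ => hF _ _ fun j hj => ?_
  by_cases hji : j = i
  · subst hji
    simp [assignOn_apply_of_notMem (notMem_erase j c)]
  · simp [assignOn, hji, hj]

/-- Reassigning `r` is an involution of `configurations × assignments of r` that exchanges the
old and new values on `r`; hence every configuration is counted once per assignment of `r`. -/
lemma sum_sumOn [Fintype V] (r : Finset V) (F : (∀ j, A j) → ℝ) :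
    ∑ σ, sumOn r F σ = Fintype.card (∀ j : {x // x ∈ r}, A j.1) * ∑ σ, F σ := by
  have e : Function.Involutive fun p : (∀ j, A j) × (∀ j : {x // x ∈ r}, A j.1) =>
      (assignOn r p.2 p.1, restrictOn r p.1) := by
    rintro ⟨σ, τ⟩
    simp [assignOn_assignOn, restrictOn_assignOn, assignOn_restrictOn]
  simp only [sumOn, ← Fintype.sum_prod_type']
  rw [← Equiv.sum_comp e.toPerm]
  simp only [Involutive.coe_toPerm, assignOn_assignOn,
    assignOn_restrictOn (fun _ _ => rfl : ∀ l ∉ r, _ = _)]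
  rw [Fintype.sum_prod_type, sum_comm]
  simp [mul_sum]

end Reassign

def IsLocal {V K : Type*} {A : V → Type*} (nbr : K → Finset V) (f : K → (∀ j, A j) → ℝ) : Prop :=
  ∀ k (σ τ : ∀ j, A j), (∀ j ∈ nbr k, σ j = τ j) → f k σ = f k τ

section Centering

variable {V : Type*} [DecidableEq V] {A : V → Type*} [∀ j, Fintype (A j)]
  {K : Type*} {nbr : K → Finset V} {f : K → (∀ j, A j) → ℝ}

variable (A) in
noncomputable def centeringCoeff (r : Finset V) : ℝ :=
  (-1) ^ r.card / ∏ j ∈ r, (Fintype.card (A j) : ℝ)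

lemma centeringCoeff_insert {r : Finset V} {j : V} (hj : j ∉ r) :
    centeringCoeff A (insert j r) = -centeringCoeff A r / Fintype.card (A j) := by
  rw [centeringCoeff, centeringCoeff, card_insert_of_notMem hj, prod_insert hj, pow_succ]
  ring

lemma locg_eq_sum_powerset_singleton (i : V) (k : K) (σ : ∀ j, A j) :
    locg A f i k σ = ∑ r ∈ ({i} : Finset V).powerset, centeringCoeff A r * sumOn r (f k) σ := by
  rw [← insert_empty, sum_powerset_insert (notMem_empty i), powerset_empty, sum_singleton,
    sum_singleton, insert_empty, sumOn_empty, sumOn_singleton, locg]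
  simp [centeringCoeff]
  ring

lemma locg_update_of_notMem (hloc : IsLocal nbr f)
    {i j : V} {k : K} (hji : j ≠ i) (hj : j ∉ nbr k) (σ : ∀ j, A j) (b : A j) :
    locg A f i k (update σ j b) = locg A f i k σ := by
  have hf : ∀ ς : ∀ j, A j, f k (update ς j b) = f k ς := fun ς =>
    hloc k _ _ fun l hl => update_of_ne (ne_of_mem_of_not_mem hl hj) b ς
  simp only [locg, hf, update_comm hji]

lemma locg_update_sub_locg (i : V) (k : K) (σ : ∀ j, A j) (b : A i) :
    locg A f i k (update σ i b) - locg A f i k σ = f k (update σ i b) - f k σ := by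
  simp only [locg, update_idem]
  ring

variable [Fintype V]

lemma globh_eq_sum_powerset (k : K) (σ : ∀ j, A j) :
    globh A nbr f k σ = ∑ r ∈ (nbr k).powerset, centeringCoeff A r * sumOn r (f k) σ := by
  rw [globh, ← add_sum_erase _ _ (empty_mem_powerset _)]
  congr 1
  simp [centeringCoeff, sumOn_empty]

lemma globh_eq_locg_add {i : V} {k : K} (hi : i ∈ nbr k) (σ : ∀ j, A j) :
    globh A nbr f k σ = locg A f i k σ +
      ∑ r ∈ (nbr k).powerset with ¬ r ⊆ {i}, centeringCoeff A r * sumOn r (f k) σ := by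
  rw [globh_eq_sum_powerset, ← sum_filter_add_sum_filter_not _ (· ⊆ {i}),
    locg_eq_sum_powerset_singleton i]
  congr 2
  ext r
  simp only [mem_filter, mem_powerset]
  exact ⟨And.right, fun h => ⟨h.trans (singleton_subset_iff.mpr hi), h⟩⟩

lemma globh_congr (hloc : IsLocal nbr f)
    {k : K} {σ τ : ∀ j, A j} (h : ∀ j ∈ nbr k, σ j = τ j) :
    globh A nbr f k σ = globh A nbr f k τ := by
  simp only [globh_eq_sum_powerset, sumOn]
  refine sum_congr rfl fun r _ => congrArg _ (sum_congr rfl fun τ' _ => hloc k _ _ fun j hj => ?_)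
  by_cases hjr : j ∈ r <;> simp [assignOn, hjr, h j hj]

variable [∀ j, Nonempty (A j)]

lemma sum_update_globh {k : K} {j : V} (hj : j ∈ nbr k) (σ : ∀ j, A j) :
    ∑ b : A j, globh A nbr f k (update σ j b) = 0 := by
  have hAj : (Fintype.card (A j) : ℝ) ≠ 0 := by positivity
  simp only [globh_eq_sum_powerset]
  rw [sum_comm, ← insert_erase hj, sum_powerset_insert (notMem_erase j _), ← sum_add_distrib]
  refine sum_eq_zero fun r hr => ?_
  have hjr : j ∉ r := fun h => notMem_erase j (nbr k) (mem_powerset.mp hr h)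
  simp only [← mul_sum, sumOn_update_of_mem (mem_insert_self j r), sum_const, card_univ,
    nsmul_eq_mul, ← sumOn_insert hjr, centeringCoeff_insert hjr]
  field_simp
  ring

lemma sumOn_mul_globh_eq_zero {s : Finset V} {k : K} {j : V} (hjs : j ∈ s) (hjk : j ∈ nbr k)
    {u : (∀ j, A j) → ℝ} (hu : ∀ ς (b : A j), u (update ς j b) = u ς) (σ : ∀ j, A j) :
    sumOn s (fun ς => u ς * globh A nbr f k ς) σ = 0 := by
  rw [sumOn_erase hjs]
  simp only [hu, ← mul_sum, sum_update_globh hjk, mul_zero]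
  exact sum_const_zero

lemma sumOn_locg_mul_globh_of_nbr_eq {c : Finset V} {i : V} (hi : i ∈ c) {k k' : K} (hk : nbr k = c)
    (hk' : nbr k' = c) (σ : ∀ j, A j) :
    sumOn (c.erase i) (fun ς => locg A f i k' ς * globh A nbr f k ς) σ =
      sumOn (c.erase i) (fun ς => globh A nbr f k' ς * globh A nbr f k ς) σ := by
  simp only [globh_eq_locg_add (hk' ▸ hi : i ∈ nbr k') _, add_mul, sum_mul, mul_assoc,
    sumOn_add, sumOn_sum_mul, left_eq_add]
  refine sum_eq_zero fun r hr => ?_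
  obtain ⟨hrc, hri⟩ := mem_filter.mp hr
  obtain ⟨j, hjr, hji⟩ := not_subset.mp hri
  have hjs : j ∈ c.erase i := mem_erase.mpr ⟨notMem_singleton.mp hji, hk' ▸ mem_powerset.mp hrc hjr⟩
  rw [sumOn_mul_globh_eq_zero hjs (hk ▸ mem_of_mem_erase hjs)
    (fun ς b => sumOn_update_of_mem hjr (f k') ς b) σ, mul_zero]

end Centering

section MaximalClique

variable {V : Type*} [DecidableEq V] {K : Type*} [Fintype K] {nbr : K → Finset V}

lemma not_ssubset_of_mem_MaxCli {c : Finset V} (hc : c ∈ MaxCli nbr) (k : K) : ¬ c ⊂ nbr k := by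
  obtain ⟨k₀, hk₀, rfl⟩ := mem_image.mp hc
  exact fun h => (mem_filter.mp hk₀).2 ⟨k, h⟩

lemma cspan_subset_Kat {c : Finset V} {i : V} (hi : i ∈ c) : cspan nbr c ⊆ Kat nbr i :=
  fun k hk => mem_filter.mpr ⟨mem_univ k, (mem_filter.mp hk).2 ▸ hi⟩

lemma card_erase_le_of_mem_MaxCli {L : ℕ} (hL : ∀ k, (nbr k).card ≤ L) {c : Finset V}
    (hc : c ∈ MaxCli nbr) {i : V} (hi : i ∈ c) : (c.erase i).card ≤ L - 1 := by
  obtain ⟨k, -, rfl⟩ := mem_image.mp hc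
  exact (card_erase_of_mem hi).trans_le (Nat.sub_le_sub_right (hL k) 1)

lemma exists_mem_erase_notMem_of_notMem_cspan {c : Finset V} (hc : c ∈ MaxCli nbr) {i : V}
    {k : K} (hk : k ∈ Kat nbr i) (hkc : k ∉ cspan nbr c) : ∃ j ∈ c.erase i, j ∉ nbr k := by
  by_contra! hsub
  have hck : c ⊆ nbr k := fun j hj => by
    by_cases hji : j = i
    · exact hji ▸ (mem_filter.mp hk).2
    · exact hsub j (mem_erase.mpr ⟨hji, hj⟩)
  have heq : nbr k = c := (eq_of_subset_of_not_ssubset hck (not_ssubset_of_mem_MaxCli hc k)).symm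
  refine hkc (mem_filter.mpr ⟨mem_filter.mpr ⟨mem_univ k, ?_⟩, heq⟩)
  exact fun ⟨k', hk'⟩ => not_ssubset_of_mem_MaxCli hc k' (heq ▸ hk')

end MaximalClique

section Orthogonality

variable {V : Type*} [Fintype V] [DecidableEq V] {A : V → Type*} [∀ j, Fintype (A j)]
  {K : Type*} [Fintype K] {nbr : K → Finset V} {f : K → (∀ j, A j) → ℝ} {c : Finset V} {i : V}

lemma sum_cspan_globh_congr
    (hloc : IsLocal nbr f) (x : K → ℝ)
    {σ ς : ∀ j, A j} (h : ∀ j ∈ c, σ j = ς j) :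
    ∑ k ∈ cspan nbr c, x k * globh A nbr f k σ = ∑ k ∈ cspan nbr c, x k * globh A nbr f k ς :=
  sum_congr rfl fun k hk => by rw [globh_congr hloc ((mem_filter.mp hk).2 ▸ h)]

variable [∀ j, Nonempty (A j)]

lemma sumOn_locg_mul_globh_of_notMem_cspan
    (hloc : IsLocal nbr f)
    (hc : c ∈ MaxCli nbr) {k k' : K} (hk : nbr k = c) (hk' : k' ∈ Kat nbr i)
    (hk'c : k' ∉ cspan nbr c) (σ : ∀ j, A j) :
    sumOn (c.erase i) (fun ς => locg A f i k' ς * globh A nbr f k ς) σ = 0 := by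
  obtain ⟨j, hjs, hjk'⟩ := exists_mem_erase_notMem_of_notMem_cspan hc hk' hk'c
  exact sumOn_mul_globh_eq_zero hjs (hk ▸ mem_of_mem_erase hjs)
    (locg_update_of_notMem hloc (ne_of_mem_erase hjs) hjk') σ

lemma sumOn_sum_locg_mul_globh (hloc : IsLocal nbr f)
    (hc : c ∈ MaxCli nbr) (hi : i ∈ c) (x : K → ℝ) {k : K} (hk : k ∈ cspan nbr c)
    (σ : ∀ j, A j) :
    sumOn (c.erase i) (fun ς => (∑ k' ∈ Kat nbr i, x k' * locg A f i k' ς) * globh A nbr f k ς) σ =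
      sumOn (c.erase i)
        (fun ς => (∑ k' ∈ cspan nbr c, x k' * globh A nbr f k' ς) * globh A nbr f k ς) σ := by
  classical
  have hkc : nbr k = c := (mem_filter.mp hk).2
  simp only [sum_mul, mul_assoc, sumOn_sum_mul]
  rw [← sum_sdiff (cspan_subset_Kat hi), sum_eq_zero, zero_add]
  · exact sum_congr rfl fun k' hk' => by
      rw [sumOn_locg_mul_globh_of_nbr_eq hi hkc (mem_filter.mp hk').2]
  · intro k' hk'
    obtain ⟨hk'i, hk'c⟩ := mem_sdiff.mp hk'
    rw [sumOn_locg_mul_globh_of_notMem_cspan hloc hc hkc hk'i hk'c, mul_zero]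

/-- Bessel's inequality: on every fibre of reassignments of `c ∖ {i}`, the combination of the
`globh` over the span of `c` is the orthogonal projection of the combination of the `locg`. -/
lemma sumOn_sq_globh_le (hloc : IsLocal nbr f)
    (hc : c ∈ MaxCli nbr) (hi : i ∈ c) (x : K → ℝ) (σ : ∀ j, A j) :
    sumOn (c.erase i) (fun ς => (∑ k ∈ cspan nbr c, x k * globh A nbr f k ς) ^ 2) σ ≤
      sumOn (c.erase i) (fun ς => (∑ k ∈ Kat nbr i, x k * locg A f i k ς) ^ 2) σ := by
  refine sum_sq_le_sum_sq_of_sum_mul_eq _ ?_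
  change sumOn (c.erase i) (fun ς => (∑ k ∈ Kat nbr i, x k * locg A f i k ς) *
      ∑ k ∈ cspan nbr c, x k * globh A nbr f k ς) σ =
    sumOn (c.erase i) (fun ς => (∑ k ∈ cspan nbr c, x k * globh A nbr f k ς) *
      ∑ k ∈ cspan nbr c, x k * globh A nbr f k ς) σ
  simp only [mul_sum, mul_left_comm _ (x _), sumOn_sum_mul]
  exact sum_congr rfl fun k hk => by rw [sumOn_sum_locg_mul_globh hloc hc hi x hk]

end Orthogonality

section Gibbs

variable {V : Type*} [DecidableEq V] {A : V → Type*} [∀ j, Fintype (A j)]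
  {K : Type*} [Fintype K] {nbr : K → Finset V} {f : K → (∀ j, A j) → ℝ} {θ : K → ℝ} {γ : ℝ}

/-- Changing one coordinate `j` moves the energy only through the factors in `K_j`, and there
by the change of `Σ θ_k g_{jk}`, which is at most `2γ`. -/
lemma energy_update_le (hloc : IsLocal nbr f)
    (hγ : ∀ (j : V) (σ : ∀ l, A l), |∑ k ∈ Kat nbr j, θ k * locg A f j k σ| ≤ γ)
    (σ : ∀ j, A j) (j : V) (b : A j) :
    ∑ k, θ k * f k (update σ j b) ≤ 2 * γ + ∑ k, θ k * f k σ := by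
  have hout : ∀ k, j ∉ nbr k → f k (update σ j b) = f k σ := fun k hj =>
    hloc k _ _ fun l hl => update_of_ne (ne_of_mem_of_not_mem hl hj) b σ
  have hdiff : ∑ k, θ k * f k (update σ j b) - ∑ k, θ k * f k σ =
      ∑ k ∈ Kat nbr j, θ k * locg A f j k (update σ j b) -
        ∑ k ∈ Kat nbr j, θ k * locg A f j k σ := by
    rw [← sum_sub_distrib, ← sum_sub_distrib, Kat, sum_filter]
    refine sum_congr rfl fun k _ => ?_
    split_ifs with hj
    · rw [← mul_sub, ← mul_sub, locg_update_sub_locg]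
    · rw [hout k hj, sub_self]
  have h₁ := abs_le.mp (hγ j (update σ j b))
  have h₂ := abs_le.mp (hγ j σ)
  linarith

lemma energy_le_of_eqOn_compl
    (hloc : IsLocal nbr f)
    (hγ : ∀ (j : V) (σ : ∀ l, A l), |∑ k ∈ Kat nbr j, θ k * locg A f j k σ| ≤ γ)
    {s : Finset V} {σ σ' : ∀ j, A j} (h : ∀ l ∉ s, σ' l = σ l) :
    ∑ k, θ k * f k σ' ≤ 2 * γ * s.card + ∑ k, θ k * f k σ := by
  induction s using Finset.induction_on generalizing σ' with
  | empty =>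
    obtain rfl : σ' = σ := funext fun l => h l (notMem_empty l)
    simp
  | @insert j s hjs ih =>
    have hσ'' : ∀ l ∉ s, update σ' j (σ j) l = σ l := fun l hl => by
      by_cases hlj : l = j
      · subst hlj; simp
      · rw [update_of_ne hlj]
        exact h l (by simp [hlj, hl])
    have hstep := energy_update_le hloc hγ (update σ' j (σ j)) j (σ' j)
    rw [update_idem, update_eq_self] at hstep
    rw [card_insert_of_notMem hjs]
    push_cast
    linarith [ih hσ'']

lemma gibbs_le_of_eqOn_compl [Fintype V]
    (hloc : IsLocal nbr f)
    (hγ : ∀ (j : V) (σ : ∀ l, A l), |∑ k ∈ Kat nbr j, θ k * locg A f j k σ| ≤ γ)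
    {μ : (∀ j, A j) → ℝ}
    (hμ : ∀ σ, μ σ =
      Real.exp (∑ k, θ k * f k σ) / ∑ τ : ∀ j, A j, Real.exp (∑ k, θ k * f k τ))
    {s : Finset V} {σ σ' : ∀ j, A j} (h : ∀ l ∉ s, σ' l = σ l) :
    μ σ' ≤ Real.exp (2 * γ * s.card) * μ σ := by
  rw [hμ, hμ, mul_div_assoc', ← Real.exp_add]
  gcongr
  linarith [energy_le_of_eqOn_compl hloc hγ h]

end Gibbs

section Fibres

variable {V : Type*} [Fintype V] [DecidableEq V] {A : V → Type*} [∀ j, Fintype (A j)]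

lemma sum_mul_apply_eq_sum_marginal [∀ j, DecidableEq (A j)] (μ : (∀ j, A j) → ℝ) (i : V)
    (W : A i → ℝ) :
    ∑ σ, μ σ * W (σ i) = ∑ a, (∑ σ : ∀ j, A j, if σ i = a then μ σ else 0) * W a := by
  simp only [sum_mul, ite_mul, zero_mul]
  rw [sum_comm]
  simp

/-- On each fibre of reassignments of `s`, `Σ μ G² ≥ (min μ) · Σ G²`, and the fibre mass of `μ`
is at most `C · #fibre · min μ`. -/
lemma sum_mul_apply_le_mul_sum_mul_sq [∀ j, Nonempty (A j)] {s : Finset V} {i : V} (hi : i ∉ s)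
    {μ G : (∀ j, A j) → ℝ} {W : A i → ℝ} {C : ℝ} (hμ0 : ∀ σ, 0 ≤ μ σ)
    (hμ : ∀ σ σ' : ∀ j, A j, (∀ l ∉ s, σ' l = σ l) → μ σ' ≤ C * μ σ)
    (hW : ∀ σ, W (σ i) ≤ sumOn s (fun ς => G ς ^ 2) σ) :
    ∑ σ, μ σ * W (σ i) ≤
      C * Fintype.card (∀ j : {x // x ∈ s}, A j.1) * ∑ σ, μ σ * G σ ^ 2 := by
  set N : ℝ := (Fintype.card (∀ j : {x // x ∈ s}, A j.1) : ℝ)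
  have hN : 0 < N := by positivity
  have hfibre : ∀ σ τ τ', μ (assignOn s τ σ) ≤ C * μ (assignOn s τ' σ) := fun σ τ τ' =>
    hμ _ _ fun l hl => by simp only [assignOn_apply_of_notMem hl]
  refine le_of_mul_le_mul_left ?_ hN
  calc N * ∑ σ, μ σ * W (σ i) = ∑ σ, sumOn s μ σ * W (σ i) := by
        rw [← sum_sumOn]
        exact sum_congr rfl fun σ _ => sumOn_mul_apply hi μ W σ
    _ ≤ ∑ σ, sumOn s μ σ * sumOn s (fun ς => G ς ^ 2) σ :=
        sum_le_sum fun σ _ => mul_le_mul_of_nonneg_left (hW σ) (sum_nonneg fun τ _ => hμ0 _)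
    _ ≤ ∑ σ, C * N * sumOn s (fun ς => μ ς * G ς ^ 2) σ :=
        sum_le_sum fun σ _ => sum_mul_sum_le_of_le_mul (hfibre σ) fun τ => sq_nonneg _
    _ = N * (C * N * ∑ σ, μ σ * G σ ^ 2) := by
        rw [← mul_sum, sum_sumOn]
        ring

end Fibres

lemma exp_div_pow_mul_le_one {γ : ℝ} (hγ : 0 ≤ γ) {q n m : ℕ} {N : ℝ} (hq : 1 ≤ q)
    (hN0 : 0 ≤ N) (hN : N ≤ q ^ n) (hnm : n ≤ m) :
    (Real.exp (-(2 * γ)) / q) ^ m * (Real.exp (2 * γ * n) * N) ≤ 1 := by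
  have hq' : (1 : ℝ) ≤ q := by exact_mod_cast hq
  have hB0 : 0 ≤ Real.exp (-(2 * γ)) / q := by positivity
  have hB1 : Real.exp (-(2 * γ)) / q ≤ 1 :=
    div_le_one_of_le₀ ((Real.exp_le_one_iff.mpr (by linarith)).trans hq') (by positivity)
  calc (Real.exp (-(2 * γ)) / q) ^ m * (Real.exp (2 * γ * n) * N)
      ≤ (Real.exp (-(2 * γ)) / q) ^ n * (Real.exp (2 * γ * n) * q ^ n) :=
        mul_le_mul (pow_le_pow_of_le_one hB0 hB1 hnm)
          (mul_le_mul_of_nonneg_left hN (Real.exp_pos _).le) (by positivity) (by positivity)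
    _ = 1 := by
        rw [div_pow, ← Real.exp_nat_mul]
        field_simp
        rw [← Real.exp_add]
        simp

theorem llc_linf2_from_npc_general
    {V : Type*} [Fintype V] [DecidableEq V]
    (A : V → Type*) [∀ i, Fintype (A i)] [∀ i, Nonempty (A i)] [∀ i, DecidableEq (A i)]
    {K : Type*} [Fintype K]
    (nbr : K → Finset V) (f : K → (∀ i, A i) → ℝ)
    (hloc : ∀ k (σ τ : ∀ i, A i), (∀ i ∈ nbr k, σ i = τ i) → f k σ = f k τ)
    (θ : K → ℝ) (γ : ℝ)
    (hγ : ∀ (j : V) (σ : ∀ l, A l), |∑ k ∈ Kat nbr j, θ k * locg A f j k σ| ≤ γ)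
    (μ : (∀ j, A j) → ℝ)
    (hμ : ∀ σ, μ σ =
      Real.exp (∑ k, θ k * f k σ) / ∑ τ : ∀ j, A j, Real.exp (∑ k, θ k * f k τ))
    (i : V)
    (q L : ℕ) (hq : ∀ j, Fintype.card (A j) ≤ q)
    (hL : ∀ k, (nbr k).card ≤ L)
    (Xi : Set (K → ℝ)) (ρ : ℝ)
    (hNPC : ∀ c ∈ MaxCli nbr, i ∈ c → ∀ x ∈ Xi,
      ∑ a : A i, (∑ σ : ∀ j, A j, if σ i = a then μ σ else 0) *
        ∑ τ : ∀ j : {v // v ∈ c.erase i}, A j.1,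
          (∑ k ∈ cspan nbr c, x k * globh A nbr f k
            (Function.update
              (assignOn (c.erase i) τ (fun j => Classical.arbitrary (A j))) i a)) ^ 2 ≥
        ρ * ∑ k ∈ cspan nbr c, x k ^ 2) :
    ∀ x ∈ Xi, ∀ c ∈ MaxCli nbr, i ∈ c →
      ∑ σ : ∀ j, A j, μ σ * (∑ k ∈ Kat nbr i, x k * locg A f i k σ) ^ 2 ≥
        ρ * (Real.exp (-(2 * γ)) / (q : ℝ)) ^ (L - 1) * ∑ k ∈ cspan nbr c, x k ^ 2 := by
  intro x hx c hc hic
  have hμ0 : ∀ σ, 0 ≤ μ σ := fun σ => by rw [hμ]; positivity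
  have hγ0 : 0 ≤ γ := (abs_nonneg _).trans (hγ i fun j => Classical.arbitrary (A j))
  set B := Real.exp (-(2 * γ)) / (q : ℝ)
  set C := Real.exp (2 * γ * (c.erase i).card)
  set N : ℝ := (Fintype.card (∀ j : {v // v ∈ c.erase i}, A j.1) : ℝ)
  set E := ∑ σ : ∀ j, A j, μ σ * (∑ k ∈ Kat nbr i, x k * locg A f i k σ) ^ 2
  set W : A i → ℝ := fun a => ∑ τ : ∀ j : {v // v ∈ c.erase i}, A j.1,
    (∑ k ∈ cspan nbr c, x k * globh A nbr f k
      (update (assignOn (c.erase i) τ fun j => Classical.arbitrary (A j)) i a)) ^ 2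
  have hNPCx : ρ * ∑ k ∈ cspan nbr c, x k ^ 2 ≤ C * N * E := by
    refine (hNPC c hc hic x hx).le.trans ((sum_mul_apply_eq_sum_marginal μ i W).symm.trans_le ?_)
    exact sum_mul_apply_le_mul_sum_mul_sq (notMem_erase i c) hμ0
      (fun σ σ' h => gibbs_le_of_eqOn_compl hloc hγ hμ h)
      (fun σ => (sumOn_eq_sum_update_assignOn hic
        (fun σ ς h => by rw [sum_cspan_globh_congr hloc x h]) σ _).symm.trans_le
        (sumOn_sq_globh_le hloc hc hic x σ))
  have hconst : B ^ (L - 1) * (C * N) ≤ 1 :=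
    exp_div_pow_mul_le_one hγ0 (Fintype.card_pos.trans_le (hq i)) (Nat.cast_nonneg _)
      (by simp only [N]; exact_mod_cast card_pi_le_pow (c.erase i) hq)
      (card_erase_le_of_mem_MaxCli hL hc hic)
  have hE : 0 ≤ E := sum_nonneg fun σ _ => mul_nonneg (hμ0 σ) (sq_nonneg _)
  calc ρ * B ^ (L - 1) * ∑ k ∈ cspan nbr c, x k ^ 2
      = B ^ (L - 1) * (ρ * ∑ k ∈ cspan nbr c, x k ^ 2) := by ring
    _ ≤ B ^ (L - 1) * (C * N) * E := by
        rw [mul_assoc _ (C * N)]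
        exact mul_le_mul_of_nonneg_left hNPCx (by positivity)
    _ ≤ E := mul_le_of_le_one_left hE hconst

/-- Proposition 3 (LLC in ℓ_{∞,2}-norm from nonsingular parametrization of cliques):
if the NPC condition holds with constant `ρ > 0` on the perturbation set `X_i`, then for
every `x ∈ X_i` and every maximal clique `c ∋ i`,
`E_μ[(Σ_{k∈K_i} x_k g_{ik}(σ))²] ≥ ρ (e^{−2γ}/q)^{L−1} Σ_{k∈span(c)} x_k²`
(i.e. the LLC holds in the ℓ_{∞,2}-norm over maximal cliques containing `i`). -/
theorem llc_linf2_from_npc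
    {V : Type*} [Fintype V] [DecidableEq V]
    (A : V → Type*) [∀ i, Fintype (A i)] [∀ i, Nonempty (A i)] [∀ i, DecidableEq (A i)]
    {K : Type*} [Fintype K]
    (nbr : K → Finset V) (f : K → (∀ i, A i) → ℝ)
    (hloc : ∀ k (σ τ : ∀ i, A i), (∀ i ∈ nbr k, σ i = τ i) → f k σ = f k τ)
    (θ : K → ℝ) (γ : ℝ)
    (hγ : ∀ (j : V) (σ : ∀ l, A l), |∑ k ∈ Kat nbr j, θ k * locg A f j k σ| ≤ γ)
    (μ : (∀ j, A j) → ℝ)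
    (hμ : ∀ σ, μ σ =
      Real.exp (∑ k, θ k * f k σ) / ∑ τ : ∀ j, A j, Real.exp (∑ k, θ k * f k τ))
    (i : V)
    (hg : ∀ k ∈ Kat nbr i, ∀ σ : ∀ j, A j, |locg A f i k σ| ≤ 1)
    (q L : ℕ) (hq : ∀ j, Fintype.card (A j) ≤ q) (hL1 : 1 ≤ L)
    (hL : ∀ k, (nbr k).card ≤ L)
    (Xi : Set (K → ℝ)) (ρ : ℝ) (hρ : 0 < ρ)
    (hNPC : ∀ c ∈ MaxCli nbr, i ∈ c → ∀ x ∈ Xi,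
      ∑ a : A i, (∑ σ : ∀ j, A j, if σ i = a then μ σ else 0) *
        ∑ τ : ∀ j : {v // v ∈ c.erase i}, A j.1,
          (∑ k ∈ cspan nbr c, x k * globh A nbr f k
            (Function.update
              (assignOn (c.erase i) τ (fun j => Classical.arbitrary (A j))) i a)) ^ 2 ≥
        ρ * ∑ k ∈ cspan nbr c, x k ^ 2) :
    ∀ x ∈ Xi, ∀ c ∈ MaxCli nbr, i ∈ c →
      ∑ σ : ∀ j, A j, μ σ * (∑ k ∈ Kat nbr i, x k * locg A f i k σ) ^ 2 ≥
        ρ * (Real.exp (-(2 * γ)) / (q : ℝ)) ^ (L - 1) * ∑ k ∈ cspan nbr c, x k ^ 2 :=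
  llc_linf2_from_npc_general A nbr f hloc θ γ hγ μ hμ i q L hq hL Xi ρ hNPC
end

section
/- Let V be a finite set, for each j ∈ V let A_j be a finite nonempty set, let ∂k ⊆ V, and let f : (Π_{j∈V} A_j) → ℝ be any function. Define the globally centered function h(σ) = f(σ) + Σ over nonempty r ⊆ ∂k of ((−1)^{|r|} / Π_{j∈r}|A_j|) · Σ over τ ∈ Π_{j∈r} A_j of f(σ[r:=τ]), where σ[r:=τ] replaces the coordinates of σ in r by τ. Then for every i ∈ ∂k and every configuration σ, Σ_{a∈A_i} h(σ[i:=a]) = 0. -/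
open Finset

set_option maxHeartbeats 1000000

lemma assignOn_update_mem {V : Type*} [DecidableEq V] {A : V → Type*} {r : Finset V} {i : V}
    (hi : i ∈ r) (τ : ∀ j : {x // x ∈ r}, A j.1) (σ : ∀ j, A j) (a : A i) :
    assignOn r τ (Function.update σ i a) = assignOn r τ σ := by
  funext j
  by_cases hj : j ∈ r
  · simp [assignOn, hj]
  · have hne : j ≠ i := fun e => hj (e ▸ hi)
    simp [assignOn, hj, Function.update_of_ne hne]

/-- The equivalence `A i × (Π j ∈ r, A j) ≃ Π j ∈ insert i r, A j` when `i ∉ r`. -/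
def insertPiEquiv {V : Type*} [DecidableEq V] {A : V → Type*} {r : Finset V} {i : V}
    (hi : i ∉ r) : (A i × ∀ j : {x // x ∈ r}, A j.1) ≃ (∀ j : {x // x ∈ insert i r}, A j.1) where
  toFun p j :=
    if h : j.1 ∈ r then p.2 ⟨j.1, h⟩
    else (by rcases Finset.mem_insert.mp j.2 with h' | h' <;> first | exact h'.symm | exact absurd h' h :
      i = j.1) ▸ p.1
  invFun τ := (τ ⟨i, mem_insert_self i r⟩, fun j => τ ⟨j.1, mem_insert_of_mem j.2⟩)
  left_inv p := by
    obtain ⟨a, τ⟩ := p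
    simp only [Prod.mk.injEq]
    constructor
    · simp [hi]
    · funext j
      simp [j.2]
  right_inv τ := by
    funext j
    obtain ⟨j, hj⟩ := j
    by_cases h : j ∈ r
    · simp [h]
    · have hji : j = i := by rcases Finset.mem_insert.mp hj with h' | h' <;> tauto
      subst hji
      simp [h]

lemma sum_assign_insert {V : Type*} [DecidableEq V] {A : V → Type*} [∀ j, Fintype (A j)]
    {r : Finset V} {i : V} (hi : i ∉ r) (f : (∀ j, A j) → ℝ) (σ : ∀ j, A j) :
    ∑ a : A i, ∑ τ : ∀ j : {x // x ∈ r}, A j.1, f (assignOn r τ (Function.update σ i a))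
      = ∑ τ : ∀ j : {x // x ∈ insert i r}, A j.1, f (assignOn (insert i r) τ σ) := by
  have step : (∑ a : A i, ∑ τ : ∀ j : {x // x ∈ r}, A j.1,
      f (assignOn r τ (Function.update σ i a)))
      = ∑ p : A i × ∀ j : {x // x ∈ r}, A j.1,
          f (assignOn r p.2 (Function.update σ i p.1)) :=
    (Fintype.sum_prod_type (fun p : A i × ∀ j : {x // x ∈ r}, A j.1 =>
      f (assignOn r p.2 (Function.update σ i p.1)))).symm
  rw [step]
  apply Fintype.sum_equiv (insertPiEquiv hi)
  rintro ⟨a, τ⟩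
  congr 1
  funext j
  by_cases hj : j ∈ r
  · have hj' : j ∈ insert i r := mem_insert_of_mem hj
    simp [assignOn, hj, hj', insertPiEquiv]
  · by_cases hji : j = i
    · subst hji
      simp [assignOn, hj, mem_insert_self, insertPiEquiv]
    · have hj' : j ∉ insert i r := by simp [hj, hji]
      simp [assignOn, hj, hj', Function.update_of_ne hji]

/-- Partial-sum-to-zero property of globally centered basis functions: the
inclusion–exclusion centering
`h(σ) = f(σ) + Σ_{∅ ≠ r ⊆ ∂k} ((−1)^{|r|} / Π_{j∈r}|A_j|) Σ_{τ∈Π_{j∈r}A_j} f(σ[r:=τ])`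
sums to zero over any single coordinate `i ∈ ∂k`. -/
theorem globally_centered_sum_zero {V : Type*} [Fintype V] [DecidableEq V]
    (A : V → Type*) [∀ j, Fintype (A j)] [∀ j, Nonempty (A j)]
    (nbrk : Finset V) (f : (∀ j, A j) → ℝ)
    (h : (∀ j, A j) → ℝ)
    (hh : ∀ σ, h σ = f σ + ∑ r ∈ nbrk.powerset.erase ∅,
      ((-1 : ℝ) ^ r.card / ∏ j ∈ r, (Fintype.card (A j) : ℝ)) *
        ∑ τ : ∀ j : {x // x ∈ r}, A j.1, f (assignOn r τ σ)) :
    ∀ i ∈ nbrk, ∀ σ : ∀ j, A j, ∑ a : A i, h (Function.update σ i a) = 0 := by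
  intro i hi σ
  set c : Finset V → ℝ := fun r => (-1 : ℝ) ^ r.card / ∏ j ∈ r, (Fintype.card (A j) : ℝ) with hc
  set S : Finset V → (∀ j, A j) → ℝ :=
    fun r σ' => ∑ τ : ∀ j : {x // x ∈ r}, A j.1, f (assignOn r τ σ') with hS
  -- rewrite h as a sum over the whole powerset
  have hform : ∀ σ', h σ' = ∑ r ∈ nbrk.powerset, c r * S r σ' := by
    intro σ'
    have hmem : (∅ : Finset V) ∈ nbrk.powerset := by simp
    rw [hh, ← Finset.add_sum_erase _ _ hmem]
    congr 1
    have he : S ∅ σ' = f σ' := by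
      show (∑ τ : ∀ j : {x // x ∈ (∅ : Finset V)}, A j.1, f (assignOn ∅ τ σ')) = f σ'
      haveI : IsEmpty {x // x ∈ (∅ : Finset V)} :=
        ⟨fun x => absurd x.2 (Finset.notMem_empty x.1)⟩
      rw [Fintype.sum_unique]
      have : assignOn (∅ : Finset V) default σ' = σ' := by
        funext j; simp [assignOn]
      rw [this]
    simp [hc, he]
  have hcard : (Fintype.card (A i) : ℝ) ≠ 0 := by
    exact_mod_cast Fintype.card_ne_zero
  calc ∑ a : A i, h (Function.update σ i a)
      = ∑ r ∈ nbrk.powerset, ∑ a : A i, c r * S r (Function.update σ i a) := by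
        rw [Finset.sum_comm]
        exact Finset.sum_congr rfl fun a _ => hform _
    _ = 0 := by
        have hnbrk : nbrk = insert i (nbrk.erase i) := (insert_erase hi).symm
        rw [hnbrk, Finset.sum_powerset_insert (notMem_erase i nbrk)]
        have key : ∀ t ∈ (nbrk.erase i).powerset,
            (∑ a : A i, c t * S t (Function.update σ i a))
            + (∑ a : A i, c (insert i t) * S (insert i t) (Function.update σ i a)) = 0 := by
          intro t ht
          have hit : i ∉ t := fun hmem => notMem_erase i nbrk (mem_powerset.mp ht hmem)
          have h1 : ∑ a : A i, S t (Function.update σ i a) = S (insert i t) σ := by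
            rw [hS]
            exact sum_assign_insert hit f σ
          have h2 : ∀ a : A i, S (insert i t) (Function.update σ i a) = S (insert i t) σ := by
            intro a
            rw [hS]
            exact Finset.sum_congr rfl fun τ _ => by
              rw [assignOn_update_mem (mem_insert_self i t)]
          have h3 : c (insert i t) * (Fintype.card (A i) : ℝ) = - c t := by
            rw [hc]
            simp only
            rw [Finset.card_insert_of_notMem hit, Finset.prod_insert hit, pow_succ]
            field_simp
          calc (∑ a : A i, c t * S t (Function.update σ i a))
              + (∑ a : A i, c (insert i t) * S (insert i t) (Function.update σ i a))
              = c t * S (insert i t) σ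
                + (Fintype.card (A i) : ℝ) * (c (insert i t) * S (insert i t) σ) := by
                rw [← Finset.mul_sum, h1]
                congr 1
                rw [Finset.sum_congr rfl fun a _ => by rw [h2 a], Finset.sum_const,
                  Finset.card_univ, nsmul_eq_mul]
            _ = c t * S (insert i t) σ
                + (c (insert i t) * (Fintype.card (A i) : ℝ)) * S (insert i t) σ := by ring
            _ = 0 := by rw [h3]; ring
        rw [← Finset.sum_add_distrib]
        exact Finset.sum_eq_zero key
end
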